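/- arXiv:2404.11089 — 2 statements merged into one kernel-verified Lean document; each statement's English description precedes it below -/
import Mathlib

section
/- Let Ω ⊂ ℝⁿ be an open bounded set, let β : ℝ → ℝ be bounded with M := sup|β| and Lipschitz continuous with Lipschitz constant L, and let ν ∈ [1,2]. Then for all u₁, u₂ ∈ L₂(Ω) and p₁ ∈ L₂(Ω, ℝⁿ) one has ‖ |p₁|^{2−ν} (β(u₁) − β(u₂)) ‖₂ ≤ (2M)^{2−ν} L^{ν−1} ‖p₁‖₂^{2−ν} ‖u₁ − u₂‖₂^{ν−1}. -/
/-!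
A bounded `L`-Lipschitz function `β` satisfies both `|β s - β t| ≤ 2M` and
`|β s - β t| ≤ L |s - t|`, hence the interpolated bound
`|β s - β t| ≤ (2M)^(2-ν) (L |s - t|)^(ν-1)`. Multiplying by `|p₁|^(2-ν)` and applying Hölder's
inequality with the conjugate weights `2 - ν` and `ν - 1` to `|p₁|²` and `|u₁ - u₂|²` gives the
estimate.
-/

open MeasureTheory
open scoped ENNReal NNReal

theorem Real.le_rpow_mul_rpow_of_le_of_le {x A B a b : ℝ} (hx : 0 ≤ x) (hxA : x ≤ A) (hxB : x ≤ B)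
    (ha : 0 ≤ a) (hb : 0 ≤ b) (hab : a + b = 1) : x ≤ A ^ a * B ^ b :=
  calc x = x ^ a * x ^ b := by rw [← Real.rpow_add_of_nonneg hx ha hb, hab, Real.rpow_one]
    _ ≤ A ^ a * B ^ b := by
      have hA : 0 ≤ A := hx.trans hxA
      gcongr

theorem LipschitzWith.dist_le_rpow_mul_rpow {X Y : Type*} [PseudoMetricSpace X]
    [PseudoMetricSpace Y] {f : X → Y} {K : ℝ≥0} (hf : LipschitzWith K f) {D : ℝ}
    (hD : ∀ x y, dist (f x) (f y) ≤ D) {a b : ℝ} (ha : 0 ≤ a) (hb : 0 ≤ b) (hab : a + b = 1)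
    (x y : X) : dist (f x) (f y) ≤ D ^ a * (K * dist x y) ^ b :=
  Real.le_rpow_mul_rpow_of_le_of_le dist_nonneg (hD x y) (hf.dist_le_mul x y) ha hb hab

section
variable {α E F : Type*} [MeasurableSpace α] {μ : Measure α}
  [NormedAddCommGroup E] [NormedAddCommGroup F] {f : α → E} {g : α → F} {a b : ℝ}

theorem eLpNorm'_norm_rpow_mul_norm_rpow_le (hf : AEStronglyMeasurable f μ)
    (hg : AEStronglyMeasurable g μ) (ha : 0 ≤ a) (hb : 0 ≤ b) (hab : a + b = 1) {q : ℝ}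
    (hq : 0 < q) :
    eLpNorm' (fun x ↦ ‖f x‖ ^ a * ‖g x‖ ^ b) q μ ≤ eLpNorm' f q μ ^ a * eLpNorm' g q μ ^ b := by
  have hpow (x : α) : ‖‖f x‖ ^ a * ‖g x‖ ^ b‖ₑ ^ q = (‖f x‖ₑ ^ q) ^ a * (‖g x‖ₑ ^ q) ^ b := by
    rw [enorm_mul, Real.enorm_rpow_of_nonneg (norm_nonneg _) ha,
      Real.enorm_rpow_of_nonneg (norm_nonneg _) hb, enorm_norm, enorm_norm,
      ENNReal.mul_rpow_of_nonneg _ _ hq.le, ← ENNReal.rpow_mul, ← ENNReal.rpow_mul,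
      ← ENNReal.rpow_mul, ← ENNReal.rpow_mul, mul_comm a, mul_comm b]
  simp only [eLpNorm'_eq_lintegral_enorm, hpow]
  calc (∫⁻ x, (‖f x‖ₑ ^ q) ^ a * (‖g x‖ₑ ^ q) ^ b ∂μ) ^ (1 / q)
      ≤ ((∫⁻ x, ‖f x‖ₑ ^ q ∂μ) ^ a * (∫⁻ x, ‖g x‖ₑ ^ q ∂μ) ^ b) ^ (1 / q) := by
        gcongr
        exact ENNReal.lintegral_mul_norm_pow_le (hf.enorm.pow_const q) (hg.enorm.pow_const q)
          ha hb hab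
    _ = ((∫⁻ x, ‖f x‖ₑ ^ q ∂μ) ^ (1 / q)) ^ a * ((∫⁻ x, ‖g x‖ₑ ^ q ∂μ) ^ (1 / q)) ^ b := by
        rw [ENNReal.mul_rpow_of_nonneg _ _ (by positivity), ← ENNReal.rpow_mul,
          ← ENNReal.rpow_mul, ← ENNReal.rpow_mul, ← ENNReal.rpow_mul, mul_comm a, mul_comm b]

theorem eLpNorm_norm_rpow_mul_norm_rpow_le (hf : AEStronglyMeasurable f μ)
    (hg : AEStronglyMeasurable g μ) (ha : 0 ≤ a) (hb : 0 ≤ b) (hab : a + b = 1) {p : ℝ≥0∞}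
    (hp0 : p ≠ 0) (hp : p ≠ ∞) :
    eLpNorm (fun x ↦ ‖f x‖ ^ a * ‖g x‖ ^ b) p μ ≤ eLpNorm f p μ ^ a * eLpNorm g p μ ^ b := by
  simp only [eLpNorm_eq_eLpNorm' hp0 hp]
  exact eLpNorm'_norm_rpow_mul_norm_rpow_le hf hg ha hb hab (ENNReal.toReal_pos hp0 hp)

end

theorem stmt_5_general {n : ℕ} (Ω : Set (EuclideanSpace ℝ (Fin n)))
    (β : ℝ → ℝ) (hβbdd : BddAbove (Set.range fun s => |β s|))
    (L : NNReal) (hβlip : LipschitzWith L β)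
    (ν : ℝ) (hν : ν ∈ Set.Icc (1 : ℝ) 2)
    (u₁ u₂ : EuclideanSpace ℝ (Fin n) → ℝ)
    (p₁ : EuclideanSpace ℝ (Fin n) → EuclideanSpace ℝ (Fin n))
    (hu₁ : MemLp u₁ 2 (volume.restrict Ω)) (hu₂ : MemLp u₂ 2 (volume.restrict Ω))
    (hp₁ : MemLp p₁ 2 (volume.restrict Ω)) :
    eLpNorm (fun x => ‖p₁ x‖ ^ (2 - ν) * (β (u₁ x) - β (u₂ x))) 2 (volume.restrict Ω)
      ≤ ENNReal.ofReal ((2 * ⨆ s, |β s|) ^ (2 - ν) * (L : ℝ) ^ (ν - 1)) *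
          eLpNorm p₁ 2 (volume.restrict Ω) ^ (2 - ν) *
          eLpNorm (fun x => u₁ x - u₂ x) 2 (volume.restrict Ω) ^ (ν - 1) := by
  obtain ⟨hν1, hν2⟩ := hν
  have ha : 0 ≤ 2 - ν := by linarith
  have hb : 0 ≤ ν - 1 := by linarith
  have hab : 2 - ν + (ν - 1) = 1 := by ring
  have hβ_osc (s t : ℝ) : dist (β s) (β t) ≤ 2 * ⨆ s, |β s| := by
    rw [Real.dist_eq]
    linarith [abs_sub (β s) (β t), le_ciSup hβbdd s, le_ciSup hβbdd t]
  have hpt (x : EuclideanSpace ℝ (Fin n)) :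
      ‖‖p₁ x‖ ^ (2 - ν) * (β (u₁ x) - β (u₂ x))‖ ≤
        (2 * ⨆ s, |β s|) ^ (2 - ν) * (L : ℝ) ^ (ν - 1) *
          ‖‖p₁ x‖ ^ (2 - ν) * ‖u₁ x - u₂ x‖ ^ (ν - 1)‖ := by
    have hβx := hβlip.dist_le_rpow_mul_rpow hβ_osc ha hb hab (u₁ x) (u₂ x)
    rw [Real.mul_rpow L.coe_nonneg dist_nonneg, Real.dist_eq, Real.dist_eq] at hβx
    have hp_nonneg : 0 ≤ ‖p₁ x‖ ^ (2 - ν) := by positivity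
    have hpu_nonneg : 0 ≤ ‖p₁ x‖ ^ (2 - ν) * ‖u₁ x - u₂ x‖ ^ (ν - 1) := by positivity
    rw [norm_mul, Real.norm_of_nonneg hp_nonneg, Real.norm_of_nonneg hpu_nonneg,
      Real.norm_eq_abs, Real.norm_eq_abs]
    calc ‖p₁ x‖ ^ (2 - ν) * |β (u₁ x) - β (u₂ x)|
        ≤ ‖p₁ x‖ ^ (2 - ν) * ((2 * ⨆ s, |β s|) ^ (2 - ν) *
            ((L : ℝ) ^ (ν - 1) * |u₁ x - u₂ x| ^ (ν - 1))) := by gcongr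
      _ = _ := by ring
  grw [eLpNorm_le_mul_eLpNorm_of_ae_le_mul (Filter.Eventually.of_forall hpt), mul_assoc,
    eLpNorm_norm_rpow_mul_norm_rpow_le (g := fun x ↦ u₁ x - u₂ x) hp₁.1 (hu₁.1.sub hu₂.1)
      ha hb hab two_ne_zero ENNReal.ofNat_ne_top]

/-- For `β : ℝ → ℝ` bounded with `M := sup|β|` and Lipschitz with
constant `L`, `ν ∈ [1,2]`, `u₁, u₂ ∈ L₂(Ω)`, `p₁ ∈ L₂(Ω,ℝⁿ)`:
`‖ |p₁|^{2−ν}(β(u₁) − β(u₂)) ‖₂ ≤ (2M)^{2−ν} L^{ν−1} ‖p₁‖₂^{2−ν} ‖u₁ − u₂‖₂^{ν−1}`. -/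
theorem stmt_5 {n : ℕ} (hn : 1 ≤ n) (Ω : Set (EuclideanSpace ℝ (Fin n)))
    (hΩopen : IsOpen Ω) (hΩbdd : Bornology.IsBounded Ω)
    (β : ℝ → ℝ) (hβbdd : BddAbove (Set.range fun s => |β s|))
    (L : NNReal) (hβlip : LipschitzWith L β)
    (ν : ℝ) (hν : ν ∈ Set.Icc (1 : ℝ) 2)
    (u₁ u₂ : EuclideanSpace ℝ (Fin n) → ℝ)
    (p₁ : EuclideanSpace ℝ (Fin n) → EuclideanSpace ℝ (Fin n))
    (hu₁ : MemLp u₁ 2 (volume.restrict Ω)) (hu₂ : MemLp u₂ 2 (volume.restrict Ω))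
    (hp₁ : MemLp p₁ 2 (volume.restrict Ω)) :
    eLpNorm (fun x => ‖p₁ x‖ ^ (2 - ν) * (β (u₁ x) - β (u₂ x))) 2 (volume.restrict Ω)
      ≤ ENNReal.ofReal ((2 * ⨆ s, |β s|) ^ (2 - ν) * (L : ℝ) ^ (ν - 1)) *
          eLpNorm p₁ 2 (volume.restrict Ω) ^ (2 - ν) *
          eLpNorm (fun x => u₁ x - u₂ x) 2 (volume.restrict Ω) ^ (ν - 1) :=
  stmt_5_general Ω β hβbdd L hβlip ν hν u₁ u₂ p₁ hu₁ hu₂ hp₁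
end

section
/- Let Ω ⊂ ℝⁿ be an open bounded set, let β : ℝ → ℝ be bounded with M := sup|β| and Lipschitz continuous with Lipschitz constant L, and let r, q ∈ (2, ∞) satisfy 1/2 = 1/r + 1/q. Define g₁(u,p,ω) := (ω·p + β(u)|p|)₋. Then for all u₁, u₂ ∈ L₂(Ω), p₁, p₂ ∈ L₂(Ω, ℝⁿ) with p₁ ∈ L_r(Ω, ℝⁿ), and ω₁, ω₂ ∈ L_∞(Ω, ℝⁿ) one has ‖g₁(u₁,p₁,ω₁) − g₁(u₂,p₂,ω₂)‖₂ ≤ (‖ω₁‖_∞ + M) ‖p₁ − p₂‖₂ + ‖p₂‖₂ ‖ω₁ − ω₂‖_∞ + (2M)^{1−2/q} L^{2/q} ‖p₁‖_r ‖u₁ − u₂‖₂^{2/q}. -/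
/-!
The negative part is 1-Lipschitz, so pointwise `|g₁(u₁,p₁,ω₁) − g₁(u₂,p₂,ω₂)|` is at most the
difference of `ω·p + β(u)|p|`, which splits as
`ω₁·(p₁−p₂) + β(u₂)(|p₁|−|p₂|) + (ω₁−ω₂)·p₂ + (β(u₁)−β(u₂))|p₁|`.
The first three terms are controlled by Cauchy–Schwarz and Hölder's inequality with one factor
in `L∞`. For the last one, a bounded Lipschitz function is Hölder of every order `θ ∈ [0,1]`:
`|β s − β t| ≤ min (2M) (L|s−t|) ≤ (2M)^(1−θ) (L|s−t|)^θ`. With `θ = 2/q`, Hölder's inequality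
for `1/2 = 1/r + 1/q` gives `‖|p₁| |u₁−u₂|^θ‖₂ ≤ ‖p₁‖_r ‖|u₁−u₂|^θ‖_q = ‖p₁‖_r ‖u₁−u₂‖₂^θ`.
-/

open MeasureTheory
open scoped ENNReal NNReal InnerProductSpace

theorem min_le_rpow_mul_rpow {a b θ : ℝ} (ha : 0 ≤ a) (hb : 0 ≤ b) (hθ0 : 0 ≤ θ) (hθ1 : θ ≤ 1) :
    min a b ≤ a ^ (1 - θ) * b ^ θ := by
  have hθ1' : 0 ≤ 1 - θ := by linarith
  calc min a b = min a b ^ ((1 - θ) + θ) := by rw [sub_add_cancel, Real.rpow_one]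
    _ = min a b ^ (1 - θ) * min a b ^ θ := Real.rpow_add' (le_min ha hb) (by simp)
    _ ≤ a ^ (1 - θ) * b ^ θ := by
      gcongr
      exacts [min_le_left a b, min_le_right a b]

theorem LipschitzWith.dist_le_rpow_of_norm_le {α E : Type*} [PseudoMetricSpace α]
    [SeminormedAddCommGroup E] {f : α → E} {K : ℝ≥0} {M θ : ℝ} (hf : LipschitzWith K f)
    (hM : ∀ x, ‖f x‖ ≤ M) (hθ0 : 0 ≤ θ) (hθ1 : θ ≤ 1) (x y : α) :
    dist (f x) (f y) ≤ (2 * M) ^ (1 - θ) * K ^ θ * dist x y ^ θ := by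
  have hM0 : 0 ≤ M := (norm_nonneg _).trans (hM x)
  calc dist (f x) (f y) ≤ min (2 * M) (K * dist x y) :=
        le_min ((dist_le_norm_add_norm (f x) (f y)).trans (by linarith [hM x, hM y]))
          (hf.dist_le_mul x y)
    _ ≤ (2 * M) ^ (1 - θ) * (K * dist x y) ^ θ :=
        min_le_rpow_mul_rpow (by positivity) (by positivity) hθ0 hθ1
    _ = (2 * M) ^ (1 - θ) * K ^ θ * dist x y ^ θ := by
        rw [Real.mul_rpow K.coe_nonneg dist_nonneg, mul_assoc]

theorem abs_max_neg_inner_add_mul_norm_sub_le {E : Type*} [NormedAddCommGroup E]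
    [InnerProductSpace ℝ E] (ω₁ ω₂ p₁ p₂ : E) (b₁ b₂ : ℝ) :
    |max (-(⟪ω₁, p₁⟫_ℝ + b₁ * ‖p₁‖)) 0 - max (-(⟪ω₂, p₂⟫_ℝ + b₂ * ‖p₂‖)) 0| ≤
      ‖ω₁‖ * ‖p₁ - p₂‖ + |b₂| * ‖p₁ - p₂‖ + ‖p₂‖ * ‖ω₁ - ω₂‖ + ‖p₁‖ * |b₁ - b₂| := by
  calc _ ≤ |(⟪ω₁, p₁⟫_ℝ + b₁ * ‖p₁‖) - (⟪ω₂, p₂⟫_ℝ + b₂ * ‖p₂‖)| :=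
        (abs_max_sub_max_le_abs _ _ 0).trans_eq (by rw [neg_sub_neg, abs_sub_comm])
    _ = |⟪ω₁, p₁ - p₂⟫_ℝ + b₂ * (‖p₁‖ - ‖p₂‖) + ⟪ω₁ - ω₂, p₂⟫_ℝ + ‖p₁‖ * (b₁ - b₂)| := by
        rw [inner_sub_right, inner_sub_left]; congr 1; ring
    _ ≤ |⟪ω₁, p₁ - p₂⟫_ℝ| + |b₂ * (‖p₁‖ - ‖p₂‖)| + |⟪ω₁ - ω₂, p₂⟫_ℝ| + |‖p₁‖ * (b₁ - b₂)| :=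
        norm_add₄_le (E := ℝ)
    _ ≤ _ := by
        rw [abs_mul, abs_mul, abs_norm]
        gcongr ?_ + |b₂| * ?_ + ?_ + _
        · exact abs_real_inner_le_norm _ _
        · exact abs_norm_sub_norm_le _ _
        · rw [mul_comm]; exact abs_real_inner_le_norm _ _

theorem abs_max_neg_inner_add_mul_norm_sub_le_of_lipschitzWith {E : Type*}
    [NormedAddCommGroup E] [InnerProductSpace ℝ E] {β : ℝ → ℝ} {K : ℝ≥0} {M θ : ℝ}
    (hβ : LipschitzWith K β) (hM : ∀ s, |β s| ≤ M) (hθ0 : 0 ≤ θ) (hθ1 : θ ≤ 1)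
    (ω₁ ω₂ p₁ p₂ : E) (u₁ u₂ : ℝ) :
    |max (-(⟪ω₁, p₁⟫_ℝ + β u₁ * ‖p₁‖)) 0 - max (-(⟪ω₂, p₂⟫_ℝ + β u₂ * ‖p₂‖)) 0| ≤
      ‖ω₁‖ * ‖p₁ - p₂‖ + M * ‖p₁ - p₂‖ + ‖p₂‖ * ‖ω₁ - ω₂‖ +
        (2 * M) ^ (1 - θ) * K ^ θ * (‖p₁‖ * |u₁ - u₂| ^ θ) := by
  have hβu := hβ.dist_le_rpow_of_norm_le hM hθ0 hθ1 u₁ u₂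
  rw [Real.dist_eq, Real.dist_eq] at hβu
  calc _ ≤ _ := abs_max_neg_inner_add_mul_norm_sub_le ω₁ ω₂ p₁ p₂ (β u₁) (β u₂)
    _ ≤ ‖ω₁‖ * ‖p₁ - p₂‖ + M * ‖p₁ - p₂‖ + ‖p₂‖ * ‖ω₁ - ω₂‖ +
        ‖p₁‖ * ((2 * M) ^ (1 - θ) * K ^ θ * |u₁ - u₂| ^ θ) := by gcongr; exact hM _
    _ = _ := by ring

section LpBounds

variable {α E F : Type*} {m : MeasurableSpace α} {μ : Measure α}
  [NormedAddCommGroup E] [NormedAddCommGroup F]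

theorem eLpNorm_add_add_add_le {f₁ f₂ f₃ f₄ : α → E} {p : ℝ≥0∞}
    (h₁ : AEStronglyMeasurable f₁ μ) (h₂ : AEStronglyMeasurable f₂ μ)
    (h₃ : AEStronglyMeasurable f₃ μ) (h₄ : AEStronglyMeasurable f₄ μ) (hp : 1 ≤ p) :
    eLpNorm (fun x => f₁ x + f₂ x + f₃ x + f₄ x) p μ ≤
      eLpNorm f₁ p μ + eLpNorm f₂ p μ + eLpNorm f₃ p μ + eLpNorm f₄ p μ := by
  calc eLpNorm (f₁ + f₂ + f₃ + f₄) p μ ≤ eLpNorm (f₁ + f₂ + f₃) p μ + eLpNorm f₄ p μ :=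
        eLpNorm_add_le ((h₁.add h₂).add h₃) h₄ hp
    _ ≤ eLpNorm (f₁ + f₂) p μ + eLpNorm f₃ p μ + eLpNorm f₄ p μ := by
        gcongr; exact eLpNorm_add_le (h₁.add h₂) h₃ hp
    _ ≤ _ := by gcongr; exact eLpNorm_add_le h₁ h₂ hp

theorem eLpNorm_const_mul_of_nonneg {c : ℝ} (hc : 0 ≤ c) (f : α → ℝ) (p : ℝ≥0∞) :
    eLpNorm (fun x => c * f x) p μ = ENNReal.ofReal c * eLpNorm f p μ := by
  rw [← Real.enorm_eq_ofReal hc]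
  exact eLpNorm_const_smul c f p μ

theorem eLpNorm_norm_mul_norm_le_top_mul (f : α → E) {g : α → F}
    (hg : AEStronglyMeasurable g μ) (p : ℝ≥0∞) :
    eLpNorm (fun x => ‖f x‖ * ‖g x‖) p μ ≤ eLpNorm f ⊤ μ * eLpNorm g p μ := by
  simpa using eLpNorm_le_eLpNorm_top_mul_eLpNorm p f hg (fun s t => ‖s‖ * ‖t‖) 1
    (.of_forall fun x => by simp [nnnorm_mul])

theorem eLpNorm_norm_mul_norm_le_mul_top {f : α → E} (hf : AEStronglyMeasurable f μ)
    (g : α → F) (p : ℝ≥0∞) :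
    eLpNorm (fun x => ‖f x‖ * ‖g x‖) p μ ≤ eLpNorm f p μ * eLpNorm g ⊤ μ := by
  simpa using eLpNorm_le_eLpNorm_mul_eLpNorm_top p hf g (fun s t => ‖s‖ * ‖t‖) 1
    (.of_forall fun x => by simp [nnnorm_mul])

theorem eLpNorm_norm_mul_norm_rpow_le {f : α → E} {g : α → F} {p q r : ℝ}
    (hpqr : r.HolderTriple q p) (hf : AEStronglyMeasurable f μ)
    (hg : AEStronglyMeasurable g μ) :
    eLpNorm (fun x => ‖f x‖ * ‖g x‖ ^ (p / q)) (.ofReal p) μ ≤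
      eLpNorm f (.ofReal r) μ * eLpNorm g (.ofReal p) μ ^ (p / q) := by
  have hθ : 0 < p / q := div_pos hpqr.pos' hpqr.symm.pos
  calc _ ≤ eLpNorm f (.ofReal r) μ * eLpNorm (fun x => ‖g x‖ ^ (p / q)) (.ofReal q) μ := by
        simpa using eLpNorm_le_eLpNorm_mul_eLpNorm'_of_norm hf
          (hg.norm.aemeasurable.pow_const (p / q)).aestronglyMeasurable (fun s t => ‖s‖ * t) 1
          (.of_forall fun x => by simp [abs_of_nonneg (Real.rpow_nonneg (norm_nonneg _) _)])
          (hpqr := hpqr.ennrealOfReal)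
    _ = _ := by
        rw [eLpNorm_norm_rpow g hθ, ← ENNReal.ofReal_mul hpqr.symm.nonneg,
          mul_div_cancel₀ p hpqr.symm.ne_zero]

end LpBounds

theorem stmt_7_general {n : ℕ} (Ω : Set (EuclideanSpace ℝ (Fin n)))
    (β : ℝ → ℝ) (hβbdd : BddAbove (Set.range fun s => |β s|))
    (L : NNReal) (hβlip : LipschitzWith L β)
    (r q : ℝ) (hr : 2 < r) (hq : 2 < q) (hrq : 1 / 2 = 1 / r + 1 / q)
    (u₁ u₂ : EuclideanSpace ℝ (Fin n) → ℝ)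
    (p₁ p₂ ω₁ ω₂ : EuclideanSpace ℝ (Fin n) → EuclideanSpace ℝ (Fin n))
    (hu₁ : MemLp u₁ 2 (volume.restrict Ω)) (hu₂ : MemLp u₂ 2 (volume.restrict Ω))
    (hp₁ : MemLp p₁ 2 (volume.restrict Ω))
    (hp₂ : MemLp p₂ 2 (volume.restrict Ω))
    (hω₁ : MemLp ω₁ ⊤ (volume.restrict Ω)) (hω₂ : MemLp ω₂ ⊤ (volume.restrict Ω)) :
    eLpNorm
        (fun x => max (-((inner ℝ (ω₁ x) (p₁ x) : ℝ) + β (u₁ x) * ‖p₁ x‖)) 0 -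
          max (-((inner ℝ (ω₂ x) (p₂ x) : ℝ) + β (u₂ x) * ‖p₂ x‖)) 0) 2 (volume.restrict Ω)
      ≤ (eLpNorm ω₁ ⊤ (volume.restrict Ω) + ENNReal.ofReal (⨆ s, |β s|)) *
            eLpNorm (fun x => p₁ x - p₂ x) 2 (volume.restrict Ω) +
          eLpNorm p₂ 2 (volume.restrict Ω) *
            eLpNorm (fun x => ω₁ x - ω₂ x) ⊤ (volume.restrict Ω) +
          ENNReal.ofReal ((2 * ⨆ s, |β s|) ^ (1 - 2 / q) * (L : ℝ) ^ (2 / q)) *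
            eLpNorm p₁ (ENNReal.ofReal r) (volume.restrict Ω) *
            eLpNorm (fun x => u₁ x - u₂ x) 2 (volume.restrict Ω) ^ (2 / q) := by
  set μ := volume.restrict Ω
  set M := ⨆ s, |β s|
  set C := (2 * M) ^ (1 - 2 / q) * (L : ℝ) ^ (2 / q)
  have hβM : ∀ s, |β s| ≤ M := le_ciSup hβbdd
  have hM : 0 ≤ M := (abs_nonneg _).trans (hβM 0)
  have hC : 0 ≤ C := by positivity
  have hexp : Real.HolderTriple r q 2 :=
    ⟨by simpa only [one_div] using hrq.symm, by linarith, by linarith⟩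
  have hd : AEStronglyMeasurable (fun x => p₁ x - p₂ x) μ := hp₁.1.sub hp₂.1
  have hw : AEStronglyMeasurable (fun x => ω₁ x - ω₂ x) μ := hω₁.1.sub hω₂.1
  have hv : AEStronglyMeasurable (fun x => u₁ x - u₂ x) μ := hu₁.1.sub hu₂.1
  calc _ ≤ eLpNorm (fun x => ‖ω₁ x‖ * ‖p₁ x - p₂ x‖ + M * ‖p₁ x - p₂ x‖ +
          ‖p₂ x‖ * ‖ω₁ x - ω₂ x‖ + C * (‖p₁ x‖ * ‖u₁ x - u₂ x‖ ^ (2 / q))) 2 μ :=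
        eLpNorm_mono_real fun x =>
          abs_max_neg_inner_add_mul_norm_sub_le_of_lipschitzWith hβlip hβM (by positivity)
            ((div_le_one (by linarith)).2 hq.le) _ _ _ _ _ _
    _ ≤ _ := eLpNorm_add_add_add_le (hω₁.1.norm.mul hd.norm)
          (aestronglyMeasurable_const.mul hd.norm) (hp₂.1.norm.mul hw.norm)
          (aestronglyMeasurable_const.mul (hp₁.1.norm.mul
            (hv.norm.aemeasurable.pow_const _).aestronglyMeasurable)) one_le_two
    _ ≤ _ := by
      rw [eLpNorm_const_mul_of_nonneg hM, eLpNorm_norm, eLpNorm_const_mul_of_nonneg hC, add_mul,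
        mul_assoc]
      gcongr
      · exact eLpNorm_norm_mul_norm_le_top_mul _ hd 2
      · exact eLpNorm_norm_mul_norm_le_mul_top hp₂.1 _ 2
      · simpa only [ENNReal.ofReal_ofNat] using eLpNorm_norm_mul_norm_rpow_le hexp hp₁.1 hv

/-- For `β` bounded (`M := sup|β|`) and Lipschitz (constant `L`),
`r, q ∈ (2,∞)` with `1/2 = 1/r + 1/q`, and `g₁(u,p,ω) := (ω·p + β(u)|p|)₋`:
`‖g₁(u₁,p₁,ω₁) − g₁(u₂,p₂,ω₂)‖₂ ≤ (‖ω₁‖_∞ + M)‖p₁−p₂‖₂ + ‖p₂‖₂‖ω₁−ω₂‖_∞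
  + (2M)^{1−2/q} L^{2/q} ‖p₁‖_r ‖u₁−u₂‖₂^{2/q}`. -/
theorem stmt_7 {n : ℕ} (hn : 1 ≤ n) (Ω : Set (EuclideanSpace ℝ (Fin n)))
    (hΩopen : IsOpen Ω) (hΩbdd : Bornology.IsBounded Ω)
    (β : ℝ → ℝ) (hβbdd : BddAbove (Set.range fun s => |β s|))
    (L : NNReal) (hβlip : LipschitzWith L β)
    (r q : ℝ) (hr : 2 < r) (hq : 2 < q) (hrq : 1 / 2 = 1 / r + 1 / q)
    (u₁ u₂ : EuclideanSpace ℝ (Fin n) → ℝ)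
    (p₁ p₂ ω₁ ω₂ : EuclideanSpace ℝ (Fin n) → EuclideanSpace ℝ (Fin n))
    (hu₁ : MemLp u₁ 2 (volume.restrict Ω)) (hu₂ : MemLp u₂ 2 (volume.restrict Ω))
    (hp₁ : MemLp p₁ 2 (volume.restrict Ω))
    (hp₁r : MemLp p₁ (ENNReal.ofReal r) (volume.restrict Ω))
    (hp₂ : MemLp p₂ 2 (volume.restrict Ω))
    (hω₁ : MemLp ω₁ ⊤ (volume.restrict Ω)) (hω₂ : MemLp ω₂ ⊤ (volume.restrict Ω)) :
    eLpNorm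
        (fun x => max (-((inner ℝ (ω₁ x) (p₁ x) : ℝ) + β (u₁ x) * ‖p₁ x‖)) 0 -
          max (-((inner ℝ (ω₂ x) (p₂ x) : ℝ) + β (u₂ x) * ‖p₂ x‖)) 0) 2 (volume.restrict Ω)
      ≤ (eLpNorm ω₁ ⊤ (volume.restrict Ω) + ENNReal.ofReal (⨆ s, |β s|)) *
            eLpNorm (fun x => p₁ x - p₂ x) 2 (volume.restrict Ω) +
          eLpNorm p₂ 2 (volume.restrict Ω) *
            eLpNorm (fun x => ω₁ x - ω₂ x) ⊤ (volume.restrict Ω) +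
          ENNReal.ofReal ((2 * ⨆ s, |β s|) ^ (1 - 2 / q) * (L : ℝ) ^ (2 / q)) *
            eLpNorm p₁ (ENNReal.ofReal r) (volume.restrict Ω) *
            eLpNorm (fun x => u₁ x - u₂ x) 2 (volume.restrict Ω) ^ (2 / q) :=
  stmt_7_general Ω β hβbdd L hβlip r q hr hq hrq u₁ u₂ p₁ p₂ ω₁ ω₂ hu₁ hu₂ hp₁ hp₂ hω₁ hω₂
end
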